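/- arXiv:1310.7215 — 2 statements merged into one kernel-verified Lean document; each statement's English description precedes it below -/
import Mathlib

section
/- If the signal s has positive-frequency part s⁺ with s^a = 2s⁺ and the window ĝ is integrable, then integrating the WFT over all frequencies recovers the analytic signal: ∫ G_s(ω,t) dω = C_g · s^a(t), where C_g = (1/2)∫ ĝ(ξ) dξ. -/
open MeasureTheory

/-- Integrating the WFT (frequency-domain form) over all frequencies recovers the
analytic signal: `∫ G_s(ω,t) dω = C_g · s^a(t)`, where
`G_s(ω,t) = (1/2π)∫₀^∞ e^{iξt} ŝ(ξ) ĝ(ω-ξ) dξ`, `C_g = (1/2)∫ ĝ`, and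
`s^a(t) = (1/π)∫₀^∞ ŝ(ξ) e^{iξt} dξ`. -/
theorem stmt6 (shat ghat : ℝ → ℂ)
    (hs : IntegrableOn shat (Set.Ioi 0)) (hg : Integrable ghat) (t : ℝ) :
    (∫ ω : ℝ, ((1 : ℂ) / (2 * (Real.pi : ℂ))) * ∫ ξ in Set.Ioi (0 : ℝ),
        Complex.exp (Complex.I * (ξ : ℂ) * (t : ℂ)) * shat ξ * ghat (ω - ξ)) =
      (((1 : ℂ) / 2) * ∫ ξ : ℝ, ghat ξ) *
        (((1 : ℂ) / (Real.pi : ℂ)) * ∫ ξ in Set.Ioi (0 : ℝ),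
          shat ξ * Complex.exp (Complex.I * (ξ : ℂ) * (t : ℂ))) := by
  set s' : ℝ → ℂ := Set.indicator (Set.Ioi 0) shat with hs'def
  have hs' : Integrable s' := (integrable_indicator_iff measurableSet_Ioi).mpr hs
  set f : ℝ → ℂ := fun ξ => Complex.exp (Complex.I * (ξ : ℂ) * (t : ℂ)) * s' ξ with hfdef
  have hf : Integrable f := by
    refine Integrable.bdd_mul (c := 1) hs' ?_ (Filter.Eventually.of_forall fun ξ => ?_)
    · exact (Complex.continuous_exp.comp (by continuity)).aestronglyMeasurable
    · simp [Complex.norm_exp]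
  -- rewrite the inner set integral as a full integral of the indicator
  have hind : ∀ ω : ℝ, (∫ ξ in Set.Ioi (0 : ℝ),
      Complex.exp (Complex.I * (ξ : ℂ) * (t : ℂ)) * shat ξ * ghat (ω - ξ)) =
      ∫ ξ : ℝ, f ξ * ghat (ω - ξ) := by
    intro ω
    rw [← integral_indicator measurableSet_Ioi]
    congr 1
    ext ξ
    by_cases h : ξ ∈ Set.Ioi (0 : ℝ) <;>
      simp [hfdef, hs'def, Set.indicator_of_mem, Set.indicator_of_notMem, h, mul_assoc]
  have hint : Integrable (fun p : ℝ × ℝ => f p.2 * ghat (p.1 - p.2))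
      ((volume : Measure ℝ).prod volume) := by
    simpa using MeasureTheory.Integrable.convolution_integrand (ContinuousLinearMap.mul ℂ ℂ)
      hf hg
  have hswap : (∫ ω : ℝ, ∫ ξ : ℝ, f ξ * ghat (ω - ξ)) =
      ∫ ξ : ℝ, ∫ ω : ℝ, f ξ * ghat (ω - ξ) := integral_integral_swap hint
  have hinner : ∀ ξ : ℝ, (∫ ω : ℝ, f ξ * ghat (ω - ξ)) = f ξ * ∫ x : ℝ, ghat x := by
    intro ξ
    rw [integral_const_mul, integral_sub_right_eq_self ghat ξ]
  have hrhs : (∫ ξ in Set.Ioi (0 : ℝ),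
      shat ξ * Complex.exp (Complex.I * (ξ : ℂ) * (t : ℂ))) = ∫ ξ : ℝ, f ξ := by
    rw [← integral_indicator measurableSet_Ioi]
    congr 1
    ext ξ
    by_cases h : ξ ∈ Set.Ioi (0 : ℝ) <;>
      simp [hfdef, hs'def, Set.indicator_of_mem, Set.indicator_of_notMem, h, mul_comm]
  simp only [hind]
  rw [integral_const_mul, hswap, hrhs]
  simp only [hinner]
  rw [integral_mul_const]
  have hπ : (Real.pi : ℂ) ≠ 0 := by
    exact_mod_cast Real.pi_ne_zero
  field_simp
end

section
/- For the two-tone signal s(t) = cos(νt) + cos((ν+Δν)t + Δφ) with 0 < ν and 0 < Δν, reconstructing each tone by splitting the WFT at frequency ω_x and integrating yields x̃₁(t) = e^{iνt}[(1 - R_g(ν - ω_x)) + R_g(ω_x - ν - Δν)e^{i(Δνt + Δφ)}], and the relative reconstruction error averaged over Δφ satisfies ε₁² = |R_g(ν - ω_x)|² + |R_g(ω_x - ν - Δν)|². -/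
open MeasureTheory intervalIntegral

lemma setIntegral_Iic_comp_sub (f : ℝ → ℂ) (a b : ℝ) :
    ∫ x in Set.Iic b, f (x - a) = ∫ x in Set.Iic (b - a), f x := by
  rw [← MeasureTheory.integral_indicator measurableSet_Iic,
    ← MeasureTheory.integral_indicator measurableSet_Iic,
    ← integral_sub_right_eq_self (Set.indicator (Set.Iic (b - a)) f) a]
  congr 1
  funext x
  simp [Set.indicator_apply, sub_le_sub_iff_right]

lemma norm_sq_eq_re_im (z : ℂ) : ‖z‖ ^ 2 = z.re ^ 2 + z.im ^ 2 := by
  rw [Complex.sq_norm, Complex.normSq_apply]; ring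

/-- Two-tone reconstruction from the WFT: splitting at frequency `ω_x` and integrating
recovers `x̃₁(t) = e^{iνt}[(1 - R_g(ν-ω_x)) + R_g(ω_x-ν-Δν)e^{i(Δνt+Δφ)}]`, and the
relative reconstruction error averaged over `Δφ ∈ [0,2π]` satisfies
`ε₁² = |R_g(ν-ω_x)|² + |R_g(ω_x-ν-Δν)|²`.  Here `R_g(ω) = C_g⁻¹ (1/2)∫_{-∞}^ω ĝ`,
`C_g = (1/2)∫ ĝ ≠ 0`, and (as asserted in the paper) `R_g(x) = 1 - R_g(-x)`. -/
theorem stmt15 (ν Δν ωx : ℝ) (hν : 0 < ν) (hΔν : 0 < Δν)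
    (ghat : ℝ → ℂ) (hg : Integrable ghat)
    (Cg : ℂ) (hCg : Cg = ((1 : ℂ) / 2) * ∫ ξ : ℝ, ghat ξ) (hCg0 : Cg ≠ 0)
    (Rg : ℝ → ℂ)
    (hRg : ∀ ω : ℝ, Rg ω = Cg⁻¹ * (((1 : ℂ) / 2) * ∫ ξ in Set.Iic ω, ghat ξ))
    (hsym : ∀ x : ℝ, Rg x + Rg (-x) = 1)
    (Gs : ℝ → ℝ → ℝ → ℂ)
    (hGs : ∀ Δφ ω t : ℝ, Gs Δφ ω t = ((1 : ℂ) / 2) * (ghat (ω - ν)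
        + ghat (ω - ν - Δν) * Complex.exp (Complex.I * ((Δν * t + Δφ : ℝ) : ℂ)))
        * Complex.exp (Complex.I * (ν : ℂ) * (t : ℂ)))
    (xt : ℝ → ℝ → ℂ)
    (hxt : ∀ Δφ t : ℝ, xt Δφ t = Cg⁻¹ * ∫ ω in Set.Iic ωx, Gs Δφ ω t) :
    (∀ Δφ t : ℝ, xt Δφ t = Complex.exp (Complex.I * (ν : ℂ) * (t : ℂ)) *
        ((1 - Rg (ν - ωx))
          + Rg (ωx - ν - Δν) * Complex.exp (Complex.I * ((Δν * t + Δφ : ℝ) : ℂ)))) ∧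
    (∀ t : ℝ, (1 / (2 * Real.pi)) * (∫ Δφ in (0 : ℝ)..(2 * Real.pi),
        ‖Complex.exp (Complex.I * (ν : ℂ) * (t : ℂ)) - xt Δφ t‖ ^ 2) =
      ‖Rg (ν - ωx)‖ ^ 2 + ‖Rg (ωx - ν - Δν)‖ ^ 2) := by
  have h1 : ∀ Δφ t : ℝ, xt Δφ t = Complex.exp (Complex.I * (ν : ℂ) * (t : ℂ)) *
      ((1 - Rg (ν - ωx))
        + Rg (ωx - ν - Δν) * Complex.exp (Complex.I * ((Δν * t + Δφ : ℝ) : ℂ))) := by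
    intro Δφ t
    set E := Complex.exp (Complex.I * ((Δν * t + Δφ : ℝ) : ℂ)) with hE
    set Fc := Complex.exp (Complex.I * (ν : ℂ) * (t : ℂ)) with hF
    have hι1 : IntegrableOn (fun ω => ghat (ω - ν)) (Set.Iic ωx) :=
      (hg.comp_sub_right ν).integrableOn
    have hι2 : IntegrableOn (fun ω => ghat (ω - ν - Δν) * E) (Set.Iic ωx) := by
      have h := ((hg.comp_sub_right (ν + Δν)).integrableOn (s := Set.Iic ωx)).mul_const E
      rw [show (fun ω => ghat (ω - ν - Δν) * E) = fun ω => ghat (ω - (ν + Δν)) * E by simp [sub_sub]]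
      exact h
    have key : ∫ ω in Set.Iic ωx, Gs Δφ ω t
        = (1 / 2 : ℂ) * ((∫ ξ in Set.Iic (ωx - ν), ghat ξ)
            + (∫ ξ in Set.Iic (ωx - ν - Δν), ghat ξ) * E) * Fc := by
      have step1 : ∫ ω in Set.Iic ωx, Gs Δφ ω t
          = ∫ ω in Set.Iic ωx, ((1 / 2 : ℂ) * Fc) * (ghat (ω - ν) + ghat (ω - ν - Δν) * E) := by
        apply setIntegral_congr_fun measurableSet_Iic
        intro ω _
        simp only [hGs]
        ring
      rw [step1, MeasureTheory.integral_const_mul, integral_add hι1 hι2, MeasureTheory.integral_mul_const,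
        setIntegral_Iic_comp_sub ghat ν ωx]
      have h2 : ∫ ω in Set.Iic ωx, ghat (ω - ν - Δν) = ∫ ξ in Set.Iic (ωx - ν - Δν), ghat ξ := by
        have := setIntegral_Iic_comp_sub ghat (ν + Δν) ωx
        simpa [sub_sub] using this
      rw [h2]
      ring
    have hs : (1 : ℂ) - Rg (ν - ωx) = Rg (ωx - ν) := by
      have h := hsym (ν - ωx)
      rw [neg_sub] at h
      linear_combination -h
    rw [hxt, key, hs, hRg (ωx - ν), hRg (ωx - ν - Δν)]
    ring
  refine ⟨h1, fun t => ?_⟩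
  set A := Rg (ν - ωx) with hA
  set B := Rg (ωx - ν - Δν) with hB
  set e1 := Complex.exp (Complex.I * ((Δν * t : ℝ) : ℂ)) with he1
  set D := B * e1 with hD
  set c := A * (starRingEnd ℂ) D with hc
  have hFnorm : ‖Complex.exp (Complex.I * (ν : ℂ) * (t : ℂ))‖ = 1 := by
    simp [Complex.norm_exp]
  have hDnorm : ‖D‖ = ‖B‖ := by
    rw [hD, norm_mul, he1]
    simp [Complex.norm_exp]
  have key2 : ∀ φ : ℝ, ‖Complex.exp (Complex.I * (ν : ℂ) * (t : ℂ)) - xt φ t‖ ^ 2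
      = (‖A‖ ^ 2 + ‖D‖ ^ 2) - 2 * c.re * Real.cos φ - 2 * c.im * Real.sin φ := by
    intro φ
    rw [h1 φ t]
    have hsplit : Complex.exp (Complex.I * ((Δν * t + φ : ℝ) : ℂ))
        = e1 * Complex.exp (Complex.I * (φ : ℂ)) := by
      rw [he1, ← Complex.exp_add]
      congr 1
      push_cast
      ring
    have hfactor : Complex.exp (Complex.I * (ν : ℂ) * (t : ℂ))
        - Complex.exp (Complex.I * (ν : ℂ) * (t : ℂ)) *
          ((1 - A) + B * (e1 * Complex.exp (Complex.I * (φ : ℂ))))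
        = Complex.exp (Complex.I * (ν : ℂ) * (t : ℂ))
          * (A - D * Complex.exp (Complex.I * (φ : ℂ))) := by
      rw [hD]; ring
    rw [hsplit, hfactor, norm_mul, hFnorm, one_mul,
      show Complex.I * (φ : ℂ) = (φ : ℂ) * Complex.I from mul_comm _ _,
      Complex.exp_mul_I, ← Complex.ofReal_cos, ← Complex.ofReal_sin]
    simp only [norm_sq_eq_re_im, hc, Complex.sub_re, Complex.sub_im, Complex.mul_re,
      Complex.mul_im, Complex.add_re, Complex.add_im, Complex.ofReal_re, Complex.ofReal_im,
      Complex.I_re, Complex.I_im, Complex.conj_re, Complex.conj_im]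
    ring_nf
    linear_combination (D.re ^ 2 + D.im ^ 2) * (Real.sin_sq_add_cos_sq φ)
  have hi2 : IntervalIntegrable (fun φ : ℝ => 2 * c.re * Real.cos φ) volume 0 (2 * Real.pi) :=
    (continuous_const.mul Real.continuous_cos).intervalIntegrable _ _
  have hi3 : IntervalIntegrable (fun φ : ℝ => 2 * c.im * Real.sin φ) volume 0 (2 * Real.pi) :=
    (continuous_const.mul Real.continuous_sin).intervalIntegrable _ _
  rw [intervalIntegral.integral_congr (g := fun φ : ℝ =>
      (‖A‖ ^ 2 + ‖D‖ ^ 2) - 2 * c.re * Real.cos φ - 2 * c.im * Real.sin φ)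
      (fun φ _ => key2 φ),
    intervalIntegral.integral_sub ((_root_.intervalIntegrable_const).sub hi2) hi3,
    intervalIntegral.integral_sub _root_.intervalIntegrable_const hi2,
    intervalIntegral.integral_const, intervalIntegral.integral_const_mul,
    intervalIntegral.integral_const_mul, integral_cos, integral_sin]
  rw [hDnorm]
  simp only [Real.sin_two_pi, Real.cos_two_pi, Real.sin_zero, Real.cos_zero, smul_eq_mul]
  have hπ : (2 * Real.pi) ≠ 0 := by positivity
  field_simp
  ring
end
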